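/- If X is infinite, the C-algebra 𝟛^X is not atomic: the constant function T cannot be expressed as a join of finitely many atoms. -/

import Mathlib

/-- The three truth values of McCarthy's three-valued logic. -/
inductive Three : Type
  | T | F | U
deriving DecidableEq

open Three

/-- Negation in `𝟛`. -/
def tneg : Three → Three
  | T => F
  | F => T
  | U => U

/-- McCarthy's left-sequential conjunction. -/
def tand : Three → Three → Three
  | T, x => x
  | F, _ => F
  | U, _ => U

/-- McCarthy's left-sequential disjunction. -/
def tor : Three → Three → Three
  | T, _ => T
  | F, x => x
  | U, _ => U

/-- Pointwise disjunction on `𝟛^X`. -/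
def fOr {X : Type*} (α β : X → Three) : X → Three := fun x => tor (α x) (β x)

/-- Pointwise conjunction on `𝟛^X`. -/
def fAnd {X : Type*} (α β : X → Three) : X → Three := fun x => tand (α x) (β x)

/-- Pointwise negation on `𝟛^X`. -/
def fNeg {X : Type*} (α : X → Three) : X → Three := fun x => tneg (α x)

/-- The constant function `F`, the bottom element of `𝟛^X`. -/
def bF {X : Type*} : X → Three := fun _ => F

/-- The order on `𝟛^X`: `α ≤ β` iff `α ∨ β = β`. -/
def fLe {X : Type*} (α β : X → Three) : Prop := fOr α β = β

/-- `α` is an atom of `𝟛^X`: `α ≠ F` and any `b` with `F ≤ b ≤ α`, `b ≠ α` is `F`. -/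
def IsAtom3 {X : Type*} (α : X → Three) : Prop :=
  α ≠ bF ∧ ∀ β : X → Three, fLe bF β → fLe β α → β ≠ α → β = bF

def fSupport {X : Type*} (α : X → Three) : Set X := {x | α x ≠ F}

lemma tor_self (a : Three) : tor a a = a := by
  cases a <;> rfl

lemma tor_eq_F_iff {a b : Three} : tor a b = F ↔ a = F ∧ b = F := by
  cases a <;> cases b <;> decide

lemma fSupport_fOr_subset {X : Type*} (α β : X → Three) :
    fSupport (fOr α β) ⊆ fSupport α ∪ fSupport β := by
  intro x hx
  by_contra h
  simp only [fSupport, Set.mem_union, Set.mem_ofPred_eq, not_or, not_not] at h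
  exact hx (tor_eq_F_iff.2 h)

/-- Restricting an atom to one point of its support gives an element below it that is not `F`,
so by atomicity the restriction is the atom itself. -/
lemma IsAtom3.fSupport_subsingleton {X : Type*} [DecidableEq X] {α : X → Three}
    (hα : IsAtom3 α) : (fSupport α).Subsingleton := by
  intro x₁ hx₁ x₂ hx₂
  by_contra hne
  set β : X → Three := Function.update bF x₁ (α x₁)
  have hβ_ge : fLe bF β := rfl
  have hβ_le : fLe β α := by
    funext x
    by_cases hx : x = x₁
    · subst hx; simp [β, fOr, tor_self]
    · simp [β, fOr, hx, bF, tor]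
  have hβ_ne : β ≠ α := fun h =>
    hx₂ (by rw [← h]; simp [β, Ne.symm hne, bF])
  have hβ_bot := hα.2 β hβ_ge hβ_le hβ_ne
  exact hx₁ (by simpa [β, bF] using congrFun hβ_bot x₁)

lemma fSupport_foldr_fOr_finite {X : Type*} (l : List (X → Three))
    (hl : ∀ a ∈ l, (fSupport a).Finite) : (fSupport (l.foldr fOr bF)).Finite := by
  induction l with
  | nil => simp [fSupport, bF]
  | cons a t ih =>
    rw [List.forall_mem_cons] at hl
    exact (hl.1.union (ih hl.2)).subset (fSupport_fOr_subset _ _)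

/-- For infinite `X`, `𝟛^X` is not atomic: the constant function `T` is not a
join of finitely many atoms. -/
theorem stmt13 {X : Type*} [Infinite X] :
    ∀ l : List (X → Three), (∀ a ∈ l, IsAtom3 a) →
      l.foldr fOr bF ≠ fun _ => Three.T := by
  classical
  intro l hl hT
  have hfin : (fSupport (l.foldr fOr bF)).Finite :=
    fSupport_foldr_fOr_finite l fun a ha => (hl a ha).fSupport_subsingleton.finite
  have huniv : fSupport (l.foldr fOr bF) = Set.univ :=
    Set.eq_univ_of_forall fun x => by simp [fSupport, hT]
  exact Set.infinite_univ (huniv ▸ hfin)
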